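/- Let X₁,…,Xₙ be independent random elements of a separable metrizable topological group G with partial products x^j_k = X_{j+1}⋯X_k, and let U_δ be a symmetric measurable neighborhood of e. Suppose P(∃ j ≤ k ≤ n : x^j_k ∉ U_δ) ≤ α < 1. Let Y be the maximal number of oscillations: Y = max { m : ∃ indices j₀ < … < j_m ≤ n with x^{j_{i−1}}_{j_i} ∉ U_δ for all i }. Then E(Y) ≤ α/(1−α). -/

import Mathlib

open MeasureTheory ProbabilityTheory
open scoped ENNReal

/-- The partial product `X_{j+1} ⋯ X_k` of a sequence of `G`-valued maps. -/
def partialProd {Ω G : Type*} [Monoid G] (X : ℕ → Ω → G) (j k : ℕ) (ω : Ω) : G :=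
  ((List.range' (j + 1) (k - j)).map (fun i => X i ω)).prod

/-- The maximal number of oscillations: the largest `m` such that there are
indices `j₀ < … < j_m ≤ n` with `x^{j_{i-1}}_{j_i} ∉ U` for all `i`. -/
noncomputable def oscillations {Ω G : Type*} [Monoid G] (X : ℕ → Ω → G) (n : ℕ)
    (U : Set G) (ω : Ω) : ℝ≥0∞ :=
  ⨆ (m : ℕ) (_ : ∃ τ : Fin (m + 1) → ℕ, StrictMono τ ∧ (∀ i, τ i ≤ n) ∧
      ∀ i : Fin m, partialProd X (τ i.castSucc) (τ i.succ) ω ∉ U), (m : ℝ≥0∞)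

/-!
Let `A m` be the event that `m` oscillations are completed by time `n`. On `A (m + 1)`, split
according to the first time `k` by which `m` oscillations are completed: this event is determined
by `X₁, …, X_k`, while the next oscillation is an exit from `U` of a partial product of
`X_{k+1}, …, X_n`, an event independent of it and of probability at most `α`. Hence
`P(A (m + 1)) ≤ α P(A m)`, so `P(A m) ≤ α ^ m` and `E Y ≤ ∑_{m ≥ 1} α ^ m = α / (1 - α)`.
-/

open Finset

section Oscillations

variable {Ω G : Type*} [Monoid G] {X : ℕ → Ω → G} {U : Set G}

def oscillationSet (X : ℕ → Ω → G) (U : Set G) (m k : ℕ) : Set Ω :=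
  {ω | ∃ τ : Fin (m + 1) → ℕ, StrictMono τ ∧ (∀ i, τ i ≤ k) ∧
      ∀ i : Fin m, partialProd X (τ i.castSucc) (τ i.succ) ω ∉ U}

def exitSetFrom (X : ℕ → Ω → G) (U : Set G) (k n : ℕ) : Set Ω :=
  {ω | ∃ j l, k ≤ j ∧ j < l ∧ l ≤ n ∧ partialProd X j l ω ∉ U}

lemma monotone_oscillationSet (X : ℕ → Ω → G) (U : Set G) (m : ℕ) :
    Monotone (oscillationSet X U m) := by
  rintro k k' hk ω ⟨τ, hτ, hτk, hτU⟩
  exact ⟨τ, hτ, fun i => (hτk i).trans hk, hτU⟩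

lemma mem_oscillationSet_of_prefix {m : ℕ} {ω : Ω} {τ : Fin (m + 1) → ℕ} (hτ : StrictMono τ)
    (hτU : ∀ i : Fin m, partialProd X (τ i.castSucc) (τ i.succ) ω ∉ U) (i : Fin (m + 1)) :
    ω ∈ oscillationSet X U i (τ i) :=
  ⟨fun t => τ (Fin.castLE i.isLt t), hτ.comp (Fin.strictMono_castLE _),
    fun t => hτ.monotone (Fin.le_iff_val_le_val.2 (by simp; omega)),
    fun t => hτU ⟨t, by omega⟩⟩

lemma antitone_oscillationSet (X : ℕ → Ω → G) (U : Set G) (k : ℕ) :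
    Antitone fun m => oscillationSet X U m k := by
  rintro m' m hm ω ⟨τ, hτ, hτk, hτU⟩
  exact monotone_oscillationSet X U m' (hτk _)
    (mem_oscillationSet_of_prefix hτ hτU ⟨m', by omega⟩)

lemma le_of_mem_oscillationSet {m k : ℕ} {ω : Ω} (h : ω ∈ oscillationSet X U m k) : m ≤ k := by
  obtain ⟨τ, hτ, hτk, -⟩ := h
  simpa using card_le_card_of_injOn τ (s := univ) (t := range (k + 1))
    (fun i _ => mem_range.2 (Nat.lt_succ_of_le (hτk i))) hτ.injective.injOn

lemma oscillationSet_succ_subset (X : ℕ → Ω → G) (U : Set G) (m n : ℕ) :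
    oscillationSet X U (m + 1) n ⊆
      ⋃ k ∈ Iic n, disjointed (oscillationSet X U m) k ∩ exitSetFrom X U k n := by
  rintro ω ⟨τ, hτ, hτn, hτU⟩
  have hm : ω ∈ oscillationSet X U m (τ (Fin.last m).castSucc) :=
    mem_oscillationSet_of_prefix hτ hτU (Fin.last m).castSucc
  rw [← (monotone_oscillationSet X U m).partialSups_eq, ← biUnion_Iic_disjointed] at hm
  obtain ⟨k, hk, hωk⟩ := Set.mem_iUnion₂.1 hm
  refine Set.mem_iUnion₂.2 ⟨k, mem_Iic.2 ((mem_Iic.1 hk).trans (hτn _)), hωk, ?_⟩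
  exact ⟨_, _, mem_Iic.1 hk, hτ Fin.castSucc_lt_succ, hτn _, hτU (Fin.last m)⟩

lemma oscillations_le_sum_indicator (X : ℕ → Ω → G) (n : ℕ) (U : Set G) (ω : Ω) :
    oscillations X n U ω ≤ ∑ m ∈ range n, (oscillationSet X U (m + 1) n).indicator 1 ω := by
  refine iSup₂_le fun m (hm : ω ∈ oscillationSet X U m n) => ?_
  calc (m : ℝ≥0∞) = ∑ i ∈ range m, (oscillationSet X U (i + 1) n).indicator 1 ω := by
        rw [sum_congr rfl fun i hi => Set.indicator_of_mem
          (antitone_oscillationSet X U n (mem_range.1 hi) hm) 1]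
        simp
    _ ≤ _ := sum_le_sum_of_subset (range_subset_range.2 (le_of_mem_oscillationSet hm))

end Oscillations

section Measurability

variable {Ω G : Type*} {mΩ : MeasurableSpace Ω} [Monoid G] [MeasurableSpace G]
  [MeasurableMul₂ G] {X : ℕ → Ω → G} {U : Set G}

lemma measurable_partialProd {j k : ℕ} (hX : ∀ i, j < i → i ≤ k → Measurable (X i)) :
    Measurable (partialProd X j k) := by
  have := List.measurable_fun_prod ((List.range' (j + 1) (k - j)).map X) <| by
    simp only [List.mem_map, List.mem_range'_1]
    rintro _ ⟨i, hi, rfl⟩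
    exact hX i (by omega) (by omega)
  simp only [List.map_map, Function.comp_def] at this
  exact this

lemma measurableSet_oscillationSet (hU : MeasurableSet U) {m k : ℕ}
    (hX : ∀ i ≤ k, Measurable (X i)) : MeasurableSet (oscillationSet X U m k) := by
  have : oscillationSet X U m k = ⋃ (τ : Fin (m + 1) → ℕ) (_ : StrictMono τ ∧ ∀ i, τ i ≤ k),
      ⋂ i : Fin m, partialProd X (τ i.castSucc) (τ i.succ) ⁻¹' Uᶜ := by
    ext; simp [oscillationSet, and_assoc]
  rw [this]
  exact .iUnion fun τ => .iUnion fun hτ => .iInter fun i =>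
    measurable_partialProd (fun i' _ hi' => hX i' (hi'.trans (hτ.2 i.succ))) hU.compl

lemma measurableSet_exitSetFrom (hU : MeasurableSet U) {k n : ℕ}
    (hX : ∀ i, k < i → Measurable (X i)) : MeasurableSet (exitSetFrom X U k n) := by
  have : exitSetFrom X U k n = ⋃ (j : ℕ) (l : ℕ) (_ : k ≤ j ∧ j < l ∧ l ≤ n),
      partialProd X j l ⁻¹' Uᶜ := by
    ext
    simp only [exitSetFrom, Set.mem_ofPred_eq, Set.mem_iUnion, Set.mem_preimage,
      Set.mem_compl_iff, exists_prop, and_assoc]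
  rw [this]
  exact .iUnion fun j => .iUnion fun l => .iUnion fun hjl =>
    measurable_partialProd (fun i hi _ => hX i (hjl.1.trans_lt hi)) hU.compl

lemma lintegral_oscillations_le (μ : Measure Ω) (hX : ∀ i, Measurable (X i))
    (hU : MeasurableSet U) (n : ℕ) :
    ∫⁻ ω, oscillations X n U ω ∂μ ≤ ∑ m ∈ range n, μ (oscillationSet X U (m + 1) n) := by
  have hmeas m : MeasurableSet (oscillationSet X U m n) :=
    measurableSet_oscillationSet hU fun i _ => hX i
  calc ∫⁻ ω, oscillations X n U ω ∂μ
      ≤ ∫⁻ ω, ∑ m ∈ range n, (oscillationSet X U (m + 1) n).indicator 1 ω ∂μ :=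
        lintegral_mono (oscillations_le_sum_indicator X n U)
    _ = ∑ m ∈ range n, μ (oscillationSet X U (m + 1) n) := by
        rw [lintegral_finsetSum _ fun m _ => measurable_one.indicator (hmeas (m + 1))]
        exact sum_congr rfl fun m _ => lintegral_indicator_one (hmeas (m + 1))

end Measurability

section Independence

variable {Ω : Type*} {mΩ : MeasurableSpace Ω} {μ : Measure Ω}

lemma measurableSet_disjointed_of_forall_le {A : ℕ → Set Ω} {k : ℕ}
    (hA : ∀ j ≤ k, MeasurableSet (A j)) : MeasurableSet (disjointed A k) := by
  rw [disjointed_eq_inter_compl]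
  exact (hA k le_rfl).inter (.iInter fun j => .iInter fun hj => (hA j hj.le).compl)

lemma measure_biUnion_disjointed_inter_le {A C : ℕ → Set Ω} {α : ℝ≥0∞} (hA : Monotone A)
    (hAmeas : ∀ k, MeasurableSet (A k))
    (h : ∀ k, μ (disjointed A k ∩ C k) ≤ μ (disjointed A k) * α) (n : ℕ) :
    μ (⋃ k ∈ Iic n, disjointed A k ∩ C k) ≤ μ (A n) * α :=
  calc μ (⋃ k ∈ Iic n, disjointed A k ∩ C k) ≤ ∑ k ∈ Iic n, μ (disjointed A k) * α :=
        (measure_biUnion_finset_le _ _).trans (sum_le_sum fun k _ => h k)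
    _ = μ (A n) * α := by
        rw [← sum_mul, ← measure_biUnion_finset ((disjoint_disjointed A).set_pairwise _)
          fun k _ => .disjointed hAmeas k, biUnion_Iic_disjointed, hA.partialSups_eq]

variable {G : Type*} [Monoid G] [mG : MeasurableSpace G] [MeasurableMul₂ G]
  {X : ℕ → Ω → G} {U : Set G} {n : ℕ} {α : ℝ≥0∞}

lemma measure_oscillationSet_succ_le (hX : ∀ i, Measurable (X i)) (hindep : iIndepFun X μ)
    (hU : MeasurableSet U) (hexit : ∀ k, μ (exitSetFrom X U k n) ≤ α) (m : ℕ) :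
    μ (oscillationSet X U (m + 1) n) ≤ μ (oscillationSet X U m n) * α := by
  let past (k : ℕ) : MeasurableSpace Ω := ⨆ i ∈ Set.Iic k, mG.comap (X i)
  let future (k : ℕ) : MeasurableSpace Ω := ⨆ i ∈ Set.Ioi k, mG.comap (X i)
  have hpast {i k : ℕ} (hik : i ≤ k) : Measurable[past k] (X i) :=
    .of_comap_le (le_iSup₂ (f := fun i (_ : i ∈ Set.Iic k) => mG.comap (X i)) i hik)
  have hfuture {i k : ℕ} (hki : k < i) : Measurable[future k] (X i) :=
    .of_comap_le (le_iSup₂ (f := fun i (_ : i ∈ Set.Ioi k) => mG.comap (X i)) i hki)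
  have hindep_k (k : ℕ) : Indep (past k) (future k) μ :=
    indep_iSup_of_disjoint (fun i => (hX i).comap_le) hindep.iIndep (Set.Iic_disjoint_Ioi le_rfl)
  refine (measure_mono (oscillationSet_succ_subset X U m n)).trans <|
    measure_biUnion_disjointed_inter_le (monotone_oscillationSet X U m)
      (fun k => measurableSet_oscillationSet hU fun i _ => hX i) (fun k => ?_) n
  rw [(Indep_iff _ _ μ).1 (hindep_k k) _ _
    (measurableSet_disjointed_of_forall_le fun j hj =>
      measurableSet_oscillationSet (mΩ := past k) hU fun i hi => hpast (hi.trans hj))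
    (measurableSet_exitSetFrom (mΩ := future k) hU fun i hi => hfuture hi)]
  gcongr
  exact hexit k

lemma measure_oscillationSet_le_pow (hX : ∀ i, Measurable (X i)) (hindep : iIndepFun X μ)
    (hU : MeasurableSet U) (hexit : ∀ k, μ (exitSetFrom X U k n) ≤ α) (m : ℕ) :
    μ (oscillationSet X U (m + 1) n) ≤ α ^ (m + 1) := by
  induction m with
  | zero =>
    refine (measure_mono ?_).trans (pow_one α ▸ hexit 0)
    rintro ω ⟨τ, hτ, hτn, hτU⟩
    exact ⟨τ 0, τ 1, Nat.zero_le _, hτ Fin.zero_lt_one, hτn 1, hτU 0⟩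
  | succ m ih =>
    calc μ (oscillationSet X U (m + 2) n) ≤ μ (oscillationSet X U (m + 1) n) * α :=
          measure_oscillationSet_succ_le hX hindep hU hexit (m + 1)
      _ ≤ α ^ (m + 2) := by rw [pow_succ]; gcongr

end Independence

theorem expected_oscillation_bound_general {Ω G : Type*} [MeasurableSpace Ω]
    {μ : Measure Ω}
    [Group G] [TopologicalSpace G] [IsTopologicalGroup G]
    [TopologicalSpace.SeparableSpace G] [TopologicalSpace.MetrizableSpace G]
    [MeasurableSpace G] [BorelSpace G]
    (n : ℕ) (X : ℕ → Ω → G) (hmeas : ∀ i, Measurable (X i))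
    (hindep : iIndepFun X μ)
    (U : Set G) (hU : MeasurableSet U)
    (α : ℝ≥0∞)
    (hbound : μ {ω | ∃ j k, j ≤ k ∧ k ≤ n ∧ partialProd X j k ω ∉ U} ≤ α) :
    ∫⁻ ω, oscillations X n U ω ∂μ ≤ α / (1 - α) := by
  have : SecondCountableTopology G :=
    let := TopologicalSpace.pseudoMetrizableSpacePseudoMetric G
    UniformSpace.secondCountable_of_separable G
  have hexit (k : ℕ) : μ (exitSetFrom X U k n) ≤ α := by
    refine (measure_mono ?_).trans hbound
    rintro ω ⟨j, l, -, hjl, hln, hω⟩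
    exact ⟨j, l, hjl.le, hln, hω⟩
  calc ∫⁻ ω, oscillations X n U ω ∂μ ≤ ∑ m ∈ range n, μ (oscillationSet X U (m + 1) n) :=
        lintegral_oscillations_le μ hmeas hU n
    _ ≤ ∑ m ∈ range n, α ^ (m + 1) :=
        sum_le_sum fun m _ => measure_oscillationSet_le_pow hmeas hindep hU hexit m
    _ ≤ ∑' m, α ^ (m + 1) := ENNReal.sum_le_tsum _
    _ = α / (1 - α) := by rw [ENNReal.tsum_geometric_add_one, div_eq_mul_inv]

theorem expected_oscillation_bound {Ω G : Type*} [MeasurableSpace Ω]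
    {μ : Measure Ω} [IsProbabilityMeasure μ]
    [Group G] [TopologicalSpace G] [IsTopologicalGroup G]
    [TopologicalSpace.SeparableSpace G] [TopologicalSpace.MetrizableSpace G]
    [MeasurableSpace G] [BorelSpace G]
    (n : ℕ) (X : ℕ → Ω → G) (hmeas : ∀ i, Measurable (X i))
    (hindep : iIndepFun X μ)
    (U : Set G) (hU : MeasurableSet U) (hUnhds : U ∈ nhds (1 : G))
    (hUsymm : ∀ g ∈ U, g⁻¹ ∈ U)
    (α : ℝ≥0∞) (hα : α < 1)
    (hbound : μ {ω | ∃ j k, j ≤ k ∧ k ≤ n ∧ partialProd X j k ω ∉ U} ≤ α) :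
    ∫⁻ ω, oscillations X n U ω ∂μ ≤ α / (1 - α) :=
  expected_oscillation_bound_general n X hmeas hindep U hU α hbound
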